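/- Let η = Σ_I η_I e_I be an element of the Clifford algebra Cl_{r+3} (sum over index subsets I of {1,...,r+3}) which commutes with e_i e_j for all 1 ≤ i < j ≤ r. Then η_I = 0 unless I ⊆ {r+1, r+2, r+3} or {1,...,r} ⊆ I; i.e., the centralizer of spin(r) in Cl_{r+3} is the 16-dimensional span of e_I for I ⊆ {r+1,r+2,r+3} and e_{1,...,r}·e_J for J ⊆ {r+1,r+2,r+3}. -/

import Mathlib

/-- The negative definite quadratic form on `ℝⁿ`. -/
noncomputable def Qneg (n : ℕ) : QuadraticForm ℝ (Fin n → ℝ) :=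
  QuadraticMap.weightedSumSquares ℝ (fun _ : Fin n => (-1 : ℝ))

/-- The Clifford algebra `Cl_n` with `e_j e_k + e_k e_j = -2 δ_{jk}`. -/
noncomputable abbrev Cl (n : ℕ) := CliffordAlgebra (Qneg n)

/-- The standard generators `e_i` of `Cl_n`. -/
noncomputable def gen (n : ℕ) (i : Fin n) : Cl n :=
  CliffordAlgebra.ι (Qneg n) (Pi.single i 1)

/-- For an index set `I = {i₁ < ⋯ < i_s}`, the basis element `e_I = e_{i₁} ⋯ e_{i_s}`. -/
noncomputable def eProd (n : ℕ) (I : Finset (Fin n)) : Cl n :=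
  ((I.sort (· ≤ ·)).map (gen n)).prod

/-!
Every `e_I` commutes or anticommutes with `e_a e_b` (`a ≠ b`), according to whether `I` contains
both or neither of `a, b`, or exactly one of them. As `(e_a e_b)² = -1`, the linear map
`y ↦ y - e_a e_b y e_a e_b` is twice the identity on the centralizer of `e_a e_b` and kills the
anticommuting `e_I`. Applying it for all pairs `a < b ≤ r` to `x = Σ η_I e_I` shows that `x` lies
in the span of the `e_I` with `I ∩ {1, …, r}` empty or everything. Only the fact that the `e_I`
span `Cl_n` is needed, not their linear independence.
-/

open Finset

section Generators

variable {n : ℕ}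

theorem Qneg_single (i : Fin n) : Qneg n (Pi.single i 1) = -1 := by
  simp [Qneg, QuadraticMap.weightedSumSquares_apply, Pi.single_apply]

theorem gen_mul_self (i : Fin n) : gen n i * gen n i = -1 := by
  rw [gen, CliffordAlgebra.ι_sq_scalar, Qneg_single, map_neg, map_one]

theorem gen_mul_gen_of_ne {i j : Fin n} (h : i ≠ j) :
    gen n i * gen n j = -(gen n j * gen n i) := by
  refine CliffordAlgebra.ι_mul_ι_comm_of_isOrtho (QuadraticMap.isOrtho_def.2 ?_)
  simp [Qneg, QuadraticMap.weightedSumSquares_apply, Pi.single_apply, Finset.sum_add_distrib,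
    mul_add, h, h.symm]

theorem eProd_empty : eProd n ∅ = 1 := by
  simp [eProd]

theorem eProd_insert_of_forall_lt {i : Fin n} {I : Finset (Fin n)} (h : ∀ j ∈ I, i < j) :
    eProd n (insert i I) = gen n i * eProd n I := by
  rw [eProd, sort_insert _ (fun j hj => (h j hj).le) (fun hi => lt_irrefl i (h i hi))]
  simp [eProd]

theorem gen_mul_eProd_of_forall_lt {i : Fin n} {I : Finset (Fin n)} (h : ∀ j ∈ I, i < j) :
    gen n i * eProd n I = eProd n (symmDiff I {i}) := by
  rw [← eProd_insert_of_forall_lt h]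
  congr 1
  ext k
  simp only [mem_insert, mem_symmDiff, mem_singleton]
  have := fun hk : k ∈ I => (h k hk).ne'
  tauto

theorem exists_gen_mul_eProd_eq_smul (i : Fin n) (I : Finset (Fin n)) :
    ∃ c : ℝ, gen n i * eProd n I = c • eProd n (symmDiff I {i}) := by
  induction I using induction_on_min generalizing i with
  | empty => exact ⟨1, by rw [one_smul]; exact gen_mul_eProd_of_forall_lt (by simp)⟩
  | insert m J hm ih =>
    have hmJ : m ∉ J := fun h => lt_irrefl m (hm m h)
    rw [eProd_insert_of_forall_lt hm]
    rcases lt_trichotomy i m with him | rfl | hmi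
    · refine ⟨1, ?_⟩
      rw [one_smul, ← eProd_insert_of_forall_lt hm]
      exact gen_mul_eProd_of_forall_lt (by simpa using ⟨him, fun j hj => him.trans (hm j hj)⟩)
    · refine ⟨-1, ?_⟩
      rw [← mul_assoc, gen_mul_self, neg_one_mul, neg_one_smul]
      congr 2
      ext k
      simp only [mem_insert, mem_symmDiff, mem_singleton]
      have := fun hk : k ∈ J => (hm k hk).ne'
      tauto
    · obtain ⟨c, hc⟩ := ih i
      refine ⟨-c, ?_⟩
      have hlt : ∀ j ∈ symmDiff J {i}, m < j := by
        intro j hj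
        rcases mem_symmDiff.1 hj with ⟨hj, -⟩ | ⟨hj, -⟩
        · exact hm j hj
        · exact (mem_singleton.1 hj) ▸ hmi
      rw [← mul_assoc, gen_mul_gen_of_ne hmi.ne', neg_mul, mul_assoc, hc, mul_smul_comm,
        gen_mul_eProd_of_forall_lt hlt, neg_smul]
      congr 3
      ext k
      simp only [mem_insert, mem_symmDiff, mem_singleton]
      have hkm : k = m → k ∉ J := fun h => h ▸ hmJ
      have := hmi.ne
      tauto

theorem gen_mul_mem_span_range_eProd (i : Fin n) {y : Cl n}
    (hy : y ∈ Submodule.span ℝ (Set.range (eProd n))) :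
    gen n i * y ∈ Submodule.span ℝ (Set.range (eProd n)) := by
  induction hy using Submodule.span_induction with
  | mem z hz =>
    obtain ⟨I, rfl⟩ := hz
    obtain ⟨c, hc⟩ := exists_gen_mul_eProd_eq_smul i I
    exact hc ▸ Submodule.smul_mem _ c (Submodule.subset_span ⟨_, rfl⟩)
  | zero => simp
  | add a b _ _ ha hb => simpa [mul_add] using Submodule.add_mem _ ha hb
  | smul c a _ ha => simpa [mul_smul_comm] using Submodule.smul_mem _ c ha

theorem span_range_eProd : Submodule.span ℝ (Set.range (eProd n)) = ⊤ := by
  set S := Submodule.span ℝ (Set.range (eProd n))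
  have hmul : ∀ x : Cl n, ∀ y ∈ S, x * y ∈ S := by
    intro x
    induction x using CliffordAlgebra.induction with
    | algebraMap c => intro y hy; simpa [Algebra.algebraMap_eq_smul_one] using S.smul_mem c hy
    | ι v =>
      intro y hy
      rw [← univ_sum_single v, map_sum, sum_mul]
      refine S.sum_mem fun i _ => ?_
      have hvi : Pi.single i (v i) = v i • (Pi.single i 1 : Fin n → ℝ) := by
        rw [← Pi.single_smul', smul_eq_mul, mul_one]
      rw [hvi, map_smul, smul_mul_assoc]
      exact S.smul_mem _ (gen_mul_mem_span_range_eProd i hy)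
    | mul a b ha hb => intro y hy; rw [mul_assoc]; exact ha _ (hb y hy)
    | add a b ha hb => intro y hy; rw [add_mul]; exact S.add_mem (ha y hy) (hb y hy)
  refine eq_top_iff.2 fun x _ => ?_
  simpa using hmul x 1 (Submodule.subset_span ⟨∅, eProd_empty⟩)

theorem gen_mul_eProd_eq_smul_eProd_mul_gen (i : Fin n) (I : Finset (Fin n)) :
    gen n i * eProd n I = (-1 : ℝ) ^ #(I.erase i) • (eProd n I * gen n i) := by
  induction I using induction_on_min with
  | empty => simp [eProd_empty]
  | insert m J hm ih =>
    have hmJ : m ∉ J := fun h => lt_irrefl m (hm m h)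
    rw [eProd_insert_of_forall_lt hm]
    obtain rfl | him := eq_or_ne i m
    · conv_lhs => rw [ih]
      rw [erase_insert hmJ, erase_eq_of_notMem hmJ, mul_smul_comm, mul_assoc]
    · rw [← mul_assoc, gen_mul_gen_of_ne him, neg_mul, mul_assoc, ih,
        erase_insert_of_ne him.symm, card_insert_of_notMem (fun h => hmJ (mem_of_mem_erase h)),
        pow_succ, mul_neg_one, neg_smul, mul_smul_comm, mul_assoc]

theorem gen_mul_gen_mul_eProd (a b : Fin n) (I : Finset (Fin n)) :
    gen n a * gen n b * eProd n I =
      (-1 : ℝ) ^ (#(I.erase a) + #(I.erase b)) • (eProd n I * (gen n a * gen n b)) := by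
  rw [mul_assoc, gen_mul_eProd_eq_smul_eProd_mul_gen b, mul_smul_comm, ← mul_assoc,
    gen_mul_eProd_eq_smul_eProd_mul_gen a, smul_mul_assoc, smul_smul, ← pow_add, add_comm,
    mul_assoc]

theorem commute_gen_mul_gen_eProd {a b : Fin n} {I : Finset (Fin n)} (h : a ∈ I ↔ b ∈ I) :
    Commute (gen n a * gen n b) (eProd n I) := by
  have hcard : #(I.erase a) = #(I.erase b) := by
    by_cases ha : a ∈ I
    · rw [card_erase_of_mem ha, card_erase_of_mem (h.1 ha)]
    · rw [erase_eq_of_notMem ha, erase_eq_of_notMem (mt h.2 ha)]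
  rw [Commute, SemiconjBy, gen_mul_gen_mul_eProd, hcard, Even.neg_one_pow ⟨_, rfl⟩, one_smul]

theorem gen_mul_gen_mul_eProd_of_not_iff {a b : Fin n} {I : Finset (Fin n)}
    (h : ¬(a ∈ I ↔ b ∈ I)) :
    gen n a * gen n b * eProd n I = -(eProd n I * (gen n a * gen n b)) := by
  have hodd : ∀ {c d : Fin n}, c ∈ I → d ∉ I → Odd (#(I.erase c) + #(I.erase d)) := by
    intro c d hc hd
    refine ⟨#(I.erase c), ?_⟩
    rw [erase_eq_of_notMem hd, ← card_erase_add_one hc]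
    ring
  have hsign : Odd (#(I.erase a) + #(I.erase b)) := by
    by_cases ha : a ∈ I
    · exact hodd ha (fun hb => h (iff_of_true ha hb))
    · rw [add_comm]
      exact hodd (by_contra fun hb => h (iff_of_false ha hb)) ha
  rw [gen_mul_gen_mul_eProd, hsign.neg_one_pow, neg_one_smul]

theorem gen_mul_gen_mul_self {a b : Fin n} (h : a ≠ b) :
    gen n a * gen n b * (gen n a * gen n b) = -1 := by
  rw [mul_assoc, ← mul_assoc (gen n b), gen_mul_gen_of_ne h.symm, neg_mul, mul_neg,
    mul_assoc, gen_mul_self, ← mul_assoc, mul_neg_one, gen_mul_self, neg_neg]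

end Generators

section Projection

variable {K A ι : Type*} [Field K] [NeZero (2 : K)] [Ring A] [Algebra K A]

theorem mem_span_image_sep_of_commute {u : A} (hu : u * u = -1) {b : ι → A} {p : ι → Prop}
    (hp : ∀ i, p i → Commute u (b i)) (hnp : ∀ i, ¬p i → u * b i = -(b i * u)) {s : Set ι}
    {y : A} (hy : y ∈ Submodule.span K (b '' s)) (hyu : Commute u y) :
    y ∈ Submodule.span K (b '' {i ∈ s | p i}) := by
  let P : A →ₗ[K] A := LinearMap.id - LinearMap.mulLeft K u ∘ₗ LinearMap.mulRight K u
  have hP : ∀ z, Commute u z → P z = (2 : K) • z := by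
    intro z hz
    change z - u * (z * u) = _
    rw [← hz.eq, ← mul_assoc, hu, neg_one_mul, sub_neg_eq_add, two_smul]
  have hPb : ∀ i ∈ s, P (b i) ∈ Submodule.span K (b '' {i ∈ s | p i}) := by
    intro i hi
    by_cases hpi : p i
    · rw [hP _ (hp i hpi)]
      exact Submodule.smul_mem _ _ (Submodule.subset_span ⟨i, ⟨hi, hpi⟩, rfl⟩)
    · change b i - u * (b i * u) ∈ _
      rw [← mul_assoc, hnp i hpi, neg_mul, mul_assoc, hu, mul_neg_one, neg_neg, sub_self]
      exact Submodule.zero_mem _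
  have hPy : P y ∈ Submodule.span K (b '' {i ∈ s | p i}) :=
    (Submodule.map_span_le P _ _).2 (by rintro _ ⟨i, hi, rfl⟩; exact hPb i hi)
      (Submodule.mem_map_of_mem hy)
  rw [hP y hyu] at hPy
  exact (Submodule.smul_mem_iff _ two_ne_zero).1 hPy

theorem mem_span_image_sep_of_forall_commute {κ : Type*} (T : Finset κ) {u : κ → A}
    (hu : ∀ k ∈ T, u k * u k = -1) {b : ι → A} {p : κ → ι → Prop}
    (hp : ∀ k ∈ T, ∀ i, p k i → Commute (u k) (b i))
    (hnp : ∀ k ∈ T, ∀ i, ¬p k i → u k * b i = -(b i * u k)) {s : Set ι} {y : A}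
    (hy : y ∈ Submodule.span K (b '' s)) (hyu : ∀ k ∈ T, Commute (u k) y) :
    y ∈ Submodule.span K (b '' {i ∈ s | ∀ k ∈ T, p k i}) := by
  classical
  induction T using Finset.induction_on with
  | empty => simpa using hy
  | insert k T _ ih =>
    simp only [forall_mem_insert] at hu hp hnp hyu ⊢
    have := mem_span_image_sep_of_commute hu.1 hp.1 hnp.1
      (ih hu.2 hp.2 hnp.2 hyu.2) hyu.1
    convert this using 4
    ext i
    simp only [Set.mem_ofPred_eq]
    tauto

end Projection

theorem exists_subset_eq_or_eq_union {n r : ℕ} {I : Finset (Fin n)}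
    (h : ∀ a b : Fin n, (a : ℕ) < r → (b : ℕ) < r → a < b → (a ∈ I ↔ b ∈ I)) :
    ∃ J ⊆ univ.filter (fun i : Fin n => r ≤ (i : ℕ)),
      I = J ∨ I = univ.filter (fun i : Fin n => (i : ℕ) < r) ∪ J := by
  by_cases hlow : ∃ a ∈ I, (a : ℕ) < r
  · obtain ⟨a, haI, har⟩ := hlow
    have hall : ∀ k : Fin n, (k : ℕ) < r → k ∈ I := by
      intro k hkr
      rcases lt_trichotomy k a with hka | rfl | hak
      · exact (h k a hkr har hka).2 haI
      · exact haI
      · exact (h a k har hkr hak).1 haI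
    refine ⟨I.filter (fun i => r ≤ (i : ℕ)), fun k hk => ?_, Or.inr ?_⟩
    · simpa using (mem_filter.1 hk).2
    · ext k
      by_cases hk : (k : ℕ) < r
      · simp [hk, hall k hk]
      · simp [hk, not_lt.1 hk]
  · push Not at hlow
    exact ⟨I, fun k hk => by simpa using hlow k hk, Or.inl rfl⟩

theorem mem_span_eProd_of_forall_commute {n r : ℕ} {x : Cl n}
    (hx : ∀ i j : Fin n, (i : ℕ) < r → (j : ℕ) < r → i < j → Commute x (gen n i * gen n j)) :
    x ∈ Submodule.span ℝ {y : Cl n | ∃ J ⊆ univ.filter (fun i : Fin n => r ≤ (i : ℕ)),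
      y = eProd n J ∨ y = eProd n (univ.filter (fun i : Fin n => (i : ℕ) < r) ∪ J)} := by
  have hmem := mem_span_image_sep_of_forall_commute (K := ℝ)
    (univ.filter fun q : Fin n × Fin n => (q.1 : ℕ) < r ∧ (q.2 : ℕ) < r ∧ q.1 < q.2)
    (u := fun q => gen n q.1 * gen n q.2) (p := fun q I => q.1 ∈ I ↔ q.2 ∈ I)
    (fun q hq => gen_mul_gen_mul_self (mem_filter.1 hq).2.2.2.ne)
    (fun _ _ _ => commute_gen_mul_gen_eProd) (fun _ _ _ => gen_mul_gen_mul_eProd_of_not_iff)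
    (s := Set.univ) (by rw [Set.image_univ, span_range_eProd]; trivial)
    (fun q hq => have hq := (mem_filter.1 hq).2; (hx _ _ hq.1 hq.2.1 hq.2.2).symm)
  refine Submodule.span_mono ?_ hmem
  rintro _ ⟨I, ⟨-, hI⟩, rfl⟩
  obtain ⟨J, hJ, hIJ | hIJ⟩ := exists_subset_eq_or_eq_union (r := r) fun a b ha hb hab =>
    hI (a, b) (mem_filter.2 ⟨mem_univ _, ha, hb, hab⟩)
  exacts [⟨J, hJ, Or.inl (congrArg _ hIJ)⟩, ⟨J, hJ, Or.inr (congrArg _ hIJ)⟩]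

theorem commute_of_mem_span_eProd {n r : ℕ} {x : Cl n}
    (hx : x ∈ Submodule.span ℝ {y : Cl n | ∃ J ⊆ univ.filter (fun i : Fin n => r ≤ (i : ℕ)),
      y = eProd n J ∨ y = eProd n (univ.filter (fun i : Fin n => (i : ℕ) < r) ∪ J)})
    {i j : Fin n} (hi : (i : ℕ) < r) (hj : (j : ℕ) < r) : Commute x (gen n i * gen n j) := by
  induction hx using Submodule.span_induction with
  | mem y hy =>
    obtain ⟨J, hJ, rfl | rfl⟩ := hy
    · have hJ' := fun k (hk : k ∈ J) => (mem_filter.1 (hJ hk)).2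
      refine (commute_gen_mul_gen_eProd (iff_of_false ?_ ?_)).symm
      exacts [fun h => by have := hJ' i h; omega, fun h => by have := hJ' j h; omega]
    · have hlow : ∀ k : Fin n, (k : ℕ) < r → k ∈ univ.filter (fun i : Fin n => (i : ℕ) < r) ∪ J :=
        fun k hk => mem_union_left J (mem_filter.2 ⟨mem_univ k, hk⟩)
      exact (commute_gen_mul_gen_eProd (iff_of_true (hlow i hi) (hlow j hj))).symm
  | zero => exact Commute.zero_left _
  | add y z _ _ hy hz => exact hy.add_left hz
  | smul c y _ hy => exact hy.smul_left c

/-- An element `η = Σ_I η_I e_I` of `Cl_{r+3}` commutes with every `e_i e_j`,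
`1 ≤ i < j ≤ r`, iff it lies in the 16-dimensional span of the `e_J` with
`J ⊆ {r+1, r+2, r+3}` together with the `e_{1,…,r}·e_J` with `J ⊆ {r+1, r+2, r+3}`. -/
theorem stmt7 (r : ℕ) (x : Cl (r + 3)) :
    let n := r + 3
    let top3 : Finset (Fin n) := Finset.univ.filter fun i => r ≤ (i : ℕ)
    let firstR : Finset (Fin n) := Finset.univ.filter fun i => (i : ℕ) < r
    (∀ i j : Fin n, (i : ℕ) < r → (j : ℕ) < r → i < j →
        Commute x (gen n i * gen n j)) ↔
      x ∈ Submodule.span ℝ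
        {y : Cl n | ∃ J ⊆ top3, y = eProd n J ∨ y = eProd n (firstR ∪ J)} :=
  ⟨mem_span_eProd_of_forall_commute, fun hx _ _ hi hj _ => commute_of_mem_span_eProd hx hi hj⟩
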